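/- arXiv:2109.00762 — 2 statements merged into one kernel-verified Lean document; each statement's English description precedes it below -/
import Mathlib

section
/- If a is a nilpotent n×n matrix over F_q, then K_n(a) = (−1)^n q^{n(n−1)/2}. In particular K_n(0) = (−1)^n q^{n(n−1)/2}. -/
/-!
Induction on `n`, using `K_n(a) = ∑_y φ(tr(a y⁻¹ + y))`. This sum is invariant under
conjugating `a`, and a nilpotent `a` is singular, so we may assume that the first column of `a`
vanishes. Then `a u = a` for every unipotent `u = [[1, w], [0, 1]]`, so replacing `y` by `y u`
multiplies the summand by `φ(c ⬝ w)`, where `c` is the part of the first column of `y` below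
the diagonal. Averaging over `w ∈ F^(n-1)` kills every `y` with `c ≠ 0`; the remaining
`y = [[α, β], [0, δ]]` contribute `φ(α) φ(tr(a' δ⁻¹ + δ))`, where `a'` is the lower right block
of `a`. Summing over `α`, `β` and `δ` gives `K_n(a) = -q^(n-1) K_(n-1)(a')`, and `a'` is again
nilpotent.
-/

open Matrix

/-- The matrix Kloosterman sum `K_n(a)`. -/
noncomputable def matKloosterman {F : Type*} [Field F] [Fintype F] [DecidableEq F]
    (n : ℕ) (φ : AddChar F ℂ) (a : Matrix (Fin n) (Fin n) F) : ℂ :=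
  ∑ x : GL (Fin n) F,
    φ (Matrix.trace (a * (x : Matrix (Fin n) (Fin n) F) +
        ((x⁻¹ : GL (Fin n) F) : Matrix (Fin n) (Fin n) F)))

open Finset

namespace AddChar

variable {A M : Type*} [AddCommMonoid A] [CommMonoid M]

theorem map_sum_eq_prod (ψ : AddChar A M) {ι : Type*} (s : Finset ι) (f : ι → A) :
    ψ (∑ i ∈ s, f i) = ∏ i ∈ s, ψ (f i) := by
  induction s using Finset.cons_induction with
  | empty => simp
  | cons i s hi ih => rw [sum_cons, prod_cons, map_add_eq_mul, ih]

variable {F : Type*} [Field F] [Fintype F] [DecidableEq F] {φ : AddChar F ℂ}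

theorem sum_dotProduct_eq_ite (hφ : φ ≠ 1) {ι : Type*} [Fintype ι] [DecidableEq ι]
    (c : ι → F) :
    ∑ w : ι → F, φ (c ⬝ᵥ w) = if c = 0 then (Fintype.card F : ℂ) ^ Fintype.card ι else 0 := by
  have hprim := IsPrimitive.of_ne_one hφ
  simp_rw [dotProduct, map_sum_eq_prod]
  rw [← Fintype.prod_sum (fun i t => φ (c i * t))]
  simp_rw [mul_comm (c _), sum_mulShift _ hprim]
  split_ifs with hc
  · simp [hc]
  · obtain ⟨i, hi⟩ := Function.ne_iff.1 hc
    exact prod_eq_zero (mem_univ i) (by simpa using hi)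

theorem sum_units_eq_neg_one (hφ : φ ≠ 1) : ∑ α : Fˣ, φ α = -1 := by
  have hsum : ∑ t : F, φ t = 0 := sum_eq_zero_iff_ne_zero.2 hφ
  rw [← add_sum_erase _ _ (mem_univ 0), map_zero_eq_one] at hsum
  rw [eq_neg_iff_add_eq_zero, add_comm, ← hsum]
  congr 1
  refine sum_nbij' (↑) (fun t => if h : t = 0 then 1 else Units.mk0 t h) ?_ ?_ ?_ ?_ ?_ <;>
    simp +contextual

end AddChar

namespace Matrix

section Field

variable {K : Type*} [Field K] {n : Type*} [Fintype n] [DecidableEq n]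

lemma exists_units_mulVec_single_eq (i : n) {v : n → K} (hv : v ≠ 0) :
    ∃ g : GL n K, (g : Matrix n n K) *ᵥ Pi.single i 1 = v := by
  have hi : (Pi.single i 1 : n → K) ≠ 0 := by simp
  obtain ⟨e, he⟩ := Submodule.exists_linearEquiv_restrict_eq
    (LinearEquiv.coord K _ _ hi ≪≫ₗ LinearEquiv.toSpanNonzeroSingleton K _ v hv)
  have he1 : e (Pi.single i 1) = v := by
    simpa [LinearEquiv.coord_self] using (he ⟨_, Submodule.mem_span_singleton_self _⟩).symm
  refine ⟨GeneralLinearGroup.toLin.symm (LinearMap.GeneralLinearGroup.ofLinearEquiv e), ?_⟩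
  ext j
  simp [GeneralLinearGroup.toLin, LinearMap.toMatrixAlgEquiv'_apply, he1]

lemma exists_units_conj_col_eq_zero {a : Matrix n n K} (ha : a.det = 0) (j : n) :
    ∃ g : GL n K, ∀ i, ((↑g⁻¹ : Matrix n n K) * a * g) i j = 0 := by
  obtain ⟨v, hv0, hv⟩ := exists_mulVec_eq_zero_iff.2 ha
  obtain ⟨g, hg⟩ := exists_units_mulVec_single_eq j hv0
  refine ⟨g, fun i => ?_⟩
  have hcol : ((↑g⁻¹ : Matrix n n K) * a * (g : Matrix n n K)) *ᵥ Pi.single j 1 = 0 := by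
    rw [← mulVec_mulVec, hg, ← mulVec_mulVec, hv, mulVec_zero]
  simpa using congr_fun hcol i

end Field

section submatrix

variable {R : Type*} [Semiring R] {m : ℕ} {a : Matrix (Fin (m + 1)) (Fin (m + 1)) R}

lemma submatrix_succ_mul (ha : ∀ i : Fin m, a i.succ 0 = 0)
    (b : Matrix (Fin (m + 1)) (Fin (m + 1)) R) :
    (a * b).submatrix Fin.succ Fin.succ =
      a.submatrix Fin.succ Fin.succ * b.submatrix Fin.succ Fin.succ := by
  ext i j
  simp [mul_apply, Fin.sum_univ_succ, ha]

lemma submatrix_succ_pow (ha : ∀ i : Fin m, a i.succ 0 = 0) (k : ℕ) :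
    (a ^ k).submatrix Fin.succ Fin.succ = a.submatrix Fin.succ Fin.succ ^ k := by
  induction k with
  | zero => exact submatrix_one _ (Fin.succ_injective _)
  | succ k ih => rw [pow_succ', submatrix_succ_mul ha, ih, pow_succ']

lemma _root_.IsNilpotent.submatrix_succ (ha : ∀ i : Fin m, a i.succ 0 = 0)
    (hn : IsNilpotent a) :
    IsNilpotent (a.submatrix Fin.succ Fin.succ) := by
  obtain ⟨k, hk⟩ := hn
  exact ⟨k, by rw [← submatrix_succ_pow ha, hk]; rfl⟩

end submatrix

section blockCons

variable {R : Type*} [CommRing R] {m : ℕ}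

/-- The block matrix `[[α, β], [0, δ]]`. -/
def blockCons (α : R) (β : Fin m → R) (δ : Matrix (Fin m) (Fin m) R) :
    Matrix (Fin (m + 1)) (Fin (m + 1)) R :=
  of (Fin.cons (Fin.cons α β) fun i => Fin.cons 0 (δ i))

section

variable (α : R) (β : Fin m → R) (δ : Matrix (Fin m) (Fin m) R)

@[simp] lemma blockCons_zero_zero : blockCons α β δ 0 0 = α := rfl
@[simp] lemma blockCons_zero_succ (j : Fin m) : blockCons α β δ 0 j.succ = β j := rfl
@[simp] lemma blockCons_succ_zero (i : Fin m) : blockCons α β δ i.succ 0 = 0 := rfl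
@[simp] lemma blockCons_succ_succ (i j : Fin m) : blockCons α β δ i.succ j.succ = δ i j := rfl

lemma blockCons_mul_blockCons (α' : R) (β' : Fin m → R) (δ' : Matrix (Fin m) (Fin m) R) :
    blockCons α β δ * blockCons α' β' δ' = blockCons (α * α') (α • β' + β ᵥ* δ') (δ * δ') := by
  ext i j
  refine Fin.cases ?_ (fun i => ?_) i <;> refine Fin.cases ?_ (fun j => ?_) j <;>
    simp [mul_apply, Fin.sum_univ_succ, vecMul, dotProduct, mul_comm]

lemma blockCons_one_zero_one : blockCons (1 : R) (0 : Fin m → R) 1 = 1 := by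
  ext i j
  refine Fin.cases ?_ (fun i => ?_) i <;> refine Fin.cases ?_ (fun j => ?_) j <;>
    simp [one_apply, Fin.succ_ne_zero, (Fin.succ_ne_zero _).symm]

lemma trace_blockCons : (blockCons α β δ).trace = α + δ.trace := by
  simp [trace, Fin.sum_univ_succ]

lemma trace_mul_blockCons_one_one (y : Matrix (Fin (m + 1)) (Fin (m + 1)) R) :
    (y * blockCons 1 β 1).trace = y.trace + (fun i => y i.succ 0) ⬝ᵥ β := by
  simp [trace, mul_apply, Fin.sum_univ_succ, one_apply, dotProduct, sum_add_distrib,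
    add_right_comm]

variable {a : Matrix (Fin (m + 1)) (Fin (m + 1)) R}

lemma mul_blockCons_one_of_col_zero (ha : ∀ i, a i 0 = 0) : a * blockCons α β 1 = a := by
  ext i j
  refine Fin.cases ?_ (fun j => ?_) j <;> simp [mul_apply, Fin.sum_univ_succ, ha, one_apply]

lemma trace_mul_blockCons_of_col_zero (ha : ∀ i, a i 0 = 0) :
    (a * blockCons α β δ).trace = (a.submatrix Fin.succ Fin.succ * δ).trace := by
  simp [trace, mul_apply, Fin.sum_univ_succ, ha]

end

def blockConsUnit (α : Rˣ) (β : Fin m → R) (δ : GL (Fin m) R) : GL (Fin (m + 1)) R where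
  val := blockCons α β δ
  inv := blockCons ↑α⁻¹ (-((↑α⁻¹ : R) • (β ᵥ* ↑δ⁻¹))) ↑δ⁻¹
  val_inv := by
    rw [blockCons_mul_blockCons, ← blockCons_one_zero_one, smul_neg, smul_smul, α.mul_inv,
      one_smul, neg_add_cancel, δ.mul_inv]
  inv_val := by
    rw [blockCons_mul_blockCons, ← blockCons_one_zero_one, neg_vecMul, smul_vecMul,
      vecMul_vecMul, δ.inv_mul, vecMul_one, add_neg_cancel, α.inv_mul]

section

variable (α : Rˣ) (β : Fin m → R) (δ : GL (Fin m) R)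

@[simp] lemma coe_blockConsUnit :
    (blockConsUnit α β δ : Matrix (Fin (m + 1)) (Fin (m + 1)) R) = blockCons ↑α β ↑δ := rfl

@[simp] lemma coe_blockConsUnit_inv :
    (↑(blockConsUnit α β δ)⁻¹ : Matrix (Fin (m + 1)) (Fin (m + 1)) R) =
      blockCons ↑α⁻¹ (-((↑α⁻¹ : R) • (β ᵥ* ↑δ⁻¹))) ↑δ⁻¹ := rfl

end

lemma blockConsUnit_injective :
    Function.Injective fun p : Rˣ × (Fin m → R) × GL (Fin m) R =>
      blockConsUnit p.1 p.2.1 p.2.2 := by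
  rintro ⟨α, β, δ⟩ ⟨α', β', δ'⟩ h
  have h := congr_arg Units.val h
  simp only [coe_blockConsUnit] at h
  simp only [Prod.mk.injEq, Units.ext_iff]
  refine ⟨by simpa using congr_fun₂ h 0 0, funext fun j => by simpa using congr_fun₂ h 0 j.succ,
    ext fun i j => by simpa using congr_fun₂ h i.succ j.succ⟩

lemma exists_eq_blockConsUnit (y : GL (Fin (m + 1)) R)
    (hy : ∀ i : Fin m, (y : Matrix (Fin (m + 1)) (Fin (m + 1)) R) i.succ 0 = 0) :
    ∃ α β δ, y = blockConsUnit α β δ := by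
  set A : Matrix (Fin (m + 1)) (Fin (m + 1)) R := ↑y
  have hdet : A.det = A 0 0 * (A.submatrix Fin.succ Fin.succ).det := by
    simp [det_succ_column_zero A, Fin.sum_univ_succ, hy, Fin.succAbove_zero]
  have hunit : IsUnit (A 0 0 * (A.submatrix Fin.succ Fin.succ).det) :=
    hdet ▸ (isUnit_iff_isUnit_det A).1 y.isUnit
  refine ⟨(isUnit_of_mul_isUnit_left hunit).unit, fun j => A 0 j.succ,
    GeneralLinearGroup.mk'' _ (isUnit_of_mul_isUnit_right hunit), Units.ext ?_⟩
  ext i j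
  refine Fin.cases ?_ (fun i => ?_) i <;> refine Fin.cases ?_ (fun j => ?_) j <;> simp [A, hy]

lemma trace_mul_blockConsUnit_inv_add_of_col_zero {a : Matrix (Fin (m + 1)) (Fin (m + 1)) R}
    (ha : ∀ i, a i 0 = 0) (α : Rˣ) (β : Fin m → R) (δ : GL (Fin m) R) :
    trace (a * (↑(blockConsUnit α β δ)⁻¹ : Matrix (Fin (m + 1)) (Fin (m + 1)) R) +
        (blockConsUnit α β δ : Matrix (Fin (m + 1)) (Fin (m + 1)) R)) =
      trace (a.submatrix Fin.succ Fin.succ * (↑δ⁻¹ : Matrix (Fin m) (Fin m) R) +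
        (δ : Matrix (Fin m) (Fin m) R)) + (α : R) := by
  rw [coe_blockConsUnit_inv, coe_blockConsUnit, trace_add, trace_add,
    trace_mul_blockCons_of_col_zero _ _ _ ha, trace_blockCons]
  ring

end blockCons

section Finite

variable {R : Type*} [CommRing R] [Fintype R] [DecidableEq R] {m : ℕ}

lemma sum_blockConsUnit {M : Type*} [AddCommMonoid M] (f : GL (Fin (m + 1)) R → M) :
    ∑ p : Rˣ × (Fin m → R) × GL (Fin m) R, f (blockConsUnit p.1 p.2.1 p.2.2) =
      ∑ y ∈ univ.filter fun y : GL (Fin (m + 1)) R =>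
        (fun i : Fin m => (y : Matrix (Fin (m + 1)) (Fin (m + 1)) R) i.succ 0) = 0, f y := by
  refine sum_bij (fun p _ => blockConsUnit p.1 p.2.1 p.2.2) (fun p _ => ?_)
    (fun p _ q _ h => blockConsUnit_injective h) (fun y hy => ?_) (fun _ _ => rfl)
  · simp [funext_iff]
  · obtain ⟨α, β, δ, rfl⟩ := exists_eq_blockConsUnit y (by simpa [funext_iff] using hy)
    exact ⟨(α, β, δ), mem_univ _, rfl⟩

end Finite

end Matrix

section matKloosterman

variable {F : Type*} [Field F] [Fintype F] [DecidableEq F] (φ : AddChar F ℂ) {m : ℕ}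

lemma matKloosterman_eq_sum_inv (n : ℕ) (a : Matrix (Fin n) (Fin n) F) :
    matKloosterman n φ a = ∑ y : GL (Fin n) F,
      φ (trace (a * (↑y⁻¹ : Matrix (Fin n) (Fin n) F) + (y : Matrix (Fin n) (Fin n) F))) :=
  Fintype.sum_equiv (Equiv.inv _) _ _ fun x => by simp

lemma matKloosterman_units_conj (n : ℕ) (a : Matrix (Fin n) (Fin n) F) (g : GL (Fin n) F) :
    matKloosterman n φ ((↑g⁻¹ : Matrix (Fin n) (Fin n) F) * a * g) = matKloosterman n φ a := by
  refine Fintype.sum_equiv (MulAut.conj g).toEquiv _ _ fun x => ?_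
  simp only [MulEquiv.toEquiv_eq_coe, MulEquiv.coe_toEquiv, MulAut.conj_apply,
    _root_.mul_inv_rev, inv_inv, Units.val_mul, trace_add, ← mul_assoc, trace_units_conj]
  rw [trace_mul_comm _ (↑g⁻¹ : Matrix (Fin n) (Fin n) F), ← mul_assoc, ← mul_assoc]

lemma matKloosterman_eq_sum_mul_dotProduct {a : Matrix (Fin (m + 1)) (Fin (m + 1)) F}
    (ha : ∀ i, a i 0 = 0) (w : Fin m → F) :
    matKloosterman (m + 1) φ a = ∑ y : GL (Fin (m + 1)) F,
      φ (trace (a * (↑y⁻¹ : Matrix (Fin (m + 1)) (Fin (m + 1)) F) +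
        (y : Matrix (Fin (m + 1)) (Fin (m + 1)) F))) *
        φ ((fun i => (y : Matrix (Fin (m + 1)) (Fin (m + 1)) F) i.succ 0) ⬝ᵥ w) := by
  rw [matKloosterman_eq_sum_inv]
  refine (Fintype.sum_equiv (Equiv.mulRight (blockConsUnit 1 w 1)) _ _ fun y => ?_).symm
  simp only [Equiv.coe_mulRight, _root_.mul_inv_rev, Units.val_mul, ← mul_assoc,
    coe_blockConsUnit_inv, coe_blockConsUnit, inv_one, Units.val_one,
    mul_blockCons_one_of_col_zero _ _ ha, trace_add, trace_mul_blockCons_one_one, ← add_assoc,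
    AddChar.map_add_eq_mul]

lemma matKloosterman_succ_eq_sum_col_zero (hφ : φ ≠ 1)
    {a : Matrix (Fin (m + 1)) (Fin (m + 1)) F} (ha : ∀ i, a i 0 = 0) :
    matKloosterman (m + 1) φ a = ∑ y ∈ univ.filter fun y : GL (Fin (m + 1)) F =>
        (fun i : Fin m => (y : Matrix (Fin (m + 1)) (Fin (m + 1)) F) i.succ 0) = 0,
      φ (trace (a * (↑y⁻¹ : Matrix (Fin (m + 1)) (Fin (m + 1)) F) +
        (y : Matrix (Fin (m + 1)) (Fin (m + 1)) F))) := by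
  set f : GL (Fin (m + 1)) F → ℂ := fun y =>
    φ (trace (a * (↑y⁻¹ : Matrix (Fin (m + 1)) (Fin (m + 1)) F) +
      (y : Matrix (Fin (m + 1)) (Fin (m + 1)) F)))
  set c : GL (Fin (m + 1)) F → Fin m → F := fun y i =>
    (y : Matrix (Fin (m + 1)) (Fin (m + 1)) F) i.succ 0
  refine mul_left_cancel₀ (pow_ne_zero m (Nat.cast_ne_zero.2 (Fintype.card_ne_zero (α := F)))) ?_
  calc (Fintype.card F : ℂ) ^ m * matKloosterman (m + 1) φ a
      = ∑ _w : Fin m → F, matKloosterman (m + 1) φ a := by simp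
    _ = ∑ w : Fin m → F, ∑ y, f y * φ (c y ⬝ᵥ w) :=
        sum_congr rfl fun w _ => matKloosterman_eq_sum_mul_dotProduct φ ha w
    _ = ∑ y, f y * ∑ w : Fin m → F, φ (c y ⬝ᵥ w) := by
        rw [sum_comm]
        simp_rw [mul_sum]
    _ = (Fintype.card F : ℂ) ^ m * ∑ y with c y = 0, f y := by
        simp_rw [AddChar.sum_dotProduct_eq_ite hφ, Fintype.card_fin, mul_ite, mul_zero, sum_ite,
          sum_const_zero, add_zero, mul_sum, mul_comm]

theorem matKloosterman_succ_of_col_zero (hφ : φ ≠ 1)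
    {a : Matrix (Fin (m + 1)) (Fin (m + 1)) F} (ha : ∀ i, a i 0 = 0) :
    matKloosterman (m + 1) φ a =
      -(Fintype.card F : ℂ) ^ m * matKloosterman m φ (a.submatrix Fin.succ Fin.succ) := by
  rw [matKloosterman_succ_eq_sum_col_zero φ hφ ha, ← sum_blockConsUnit,
    matKloosterman_eq_sum_inv, Fintype.sum_prod_type]
  simp only [trace_mul_blockConsUnit_inv_add_of_col_zero ha, AddChar.map_add_eq_mul,
    Fintype.sum_prod_type, ← sum_mul, ← mul_sum, AddChar.sum_units_eq_neg_one hφ, sum_const,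
    card_univ, Fintype.card_fun, Fintype.card_fin, nsmul_eq_mul]
  push_cast
  ring

end matKloosterman

/-- If `a` is nilpotent then `K_n(a) = (-1)^n q^{n(n-1)/2}`. -/
theorem matKloosterman_nilpotent {F : Type*} [Field F] [Fintype F] [DecidableEq F]
    {n : ℕ} (φ : AddChar F ℂ) (hφ : φ ≠ 1)
    (a : Matrix (Fin n) (Fin n) F) (ha : IsNilpotent a) :
    matKloosterman n φ a = (-1) ^ n * (Fintype.card F : ℂ) ^ (n * (n - 1) / 2) := by
  induction n with
  | zero => simp [matKloosterman]
  | succ m ih =>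
    obtain ⟨k, hk⟩ := ha
    have hdet : a.det = 0 :=
      IsNilpotent.eq_zero ⟨k, by rw [← det_pow, hk, det_zero]⟩
    obtain ⟨g, hg⟩ := exists_units_conj_col_eq_zero hdet 0
    have hconj : IsNilpotent ((↑g⁻¹ : Matrix (Fin (m + 1)) (Fin (m + 1)) F) * a * g) :=
      ⟨k, by rw [Units.conj_pow', hk, mul_zero, zero_mul]⟩
    rw [← matKloosterman_units_conj φ _ a g, matKloosterman_succ_of_col_zero φ hφ hg,
      ih _ (hconj.submatrix_succ fun i => hg i.succ), Nat.triangle_succ, pow_add, pow_succ]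
    ring
end

section
/- Let a be an upper triangular invertible n×n matrix over F_q and let w ∈ S_n with w² ≠ id. Then the Kloosterman sum over the Bruhat cell C_w = U_w w B vanishes: ∑_{x ∈ C_w} φ(tr(a x + x^{-1})) = 0. -/
open Matrix
open scoped Classical

/-!
Write `p_S` (`proj S`) for the diagonal projection onto the indices in `S`, and let `C` be a lower
set and `R` an upper set of indices disjoint from `C`. Then `1 + p_C v p_R` lies in `B`, so right
multiplication by it preserves `C_w`, and it changes `tr (a x + x⁻¹)` by
`tr (p_R (a x - x⁻¹) p_C v)`. Averaging over `v`, the sum vanishes once the corner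
`p_R (a x - x⁻¹) p_C` is nonzero for every `x ∈ C_w`. For `x = u w b` the corners of
`a x = (a u) w b` and of `x⁻¹ = b⁻¹ w⁻¹ u⁻¹` have the ranks of the corners of the permutation
matrices of `w` and `w⁻¹`, because triangular factors do not change the rank of a corner of this
shape; and when `w² ≠ 1`, the permutation matrices of `w` and `w⁻¹` have different numbers of ones
in some such corner.
-/

/-- The permutation matrix `w_σ = ∑_j E_{σ(j), j}`. -/
def permMat {F : Type*} [Field F] {n : ℕ} (σ : Equiv.Perm (Fin n)) :
    Matrix (Fin n) (Fin n) F :=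
  Matrix.of fun i j => if σ j = i then 1 else 0

/-- Upper triangular matrices. -/
def UpperTri {F : Type*} [Field F] {n : ℕ} (M : Matrix (Fin n) (Fin n) F) : Prop :=
  ∀ i j : Fin n, j < i → M i j = 0

/-- Lower triangular matrices. -/
def LowerTri {F : Type*} [Field F] {n : ℕ} (M : Matrix (Fin n) (Fin n) F) : Prop :=
  ∀ i j : Fin n, i < j → M i j = 0

/-- The Borel subgroup of invertible upper triangular matrices. -/
def borelGL (F : Type*) [Field F] (n : ℕ) : Set (GL (Fin n) F) :=
  {b | UpperTri (b : Matrix (Fin n) (Fin n) F)}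

/-- `U_w = {u ∈ U | w⁻¹ u w lower triangular}`, `U` the upper triangular unipotent group. -/
def Uw (F : Type*) [Field F] {n : ℕ} (w : Equiv.Perm (Fin n)) : Set (GL (Fin n) F) :=
  {u | UpperTri (u : Matrix (Fin n) (Fin n) F) ∧
    (∀ i : Fin n, (u : Matrix (Fin n) (Fin n) F) i i = 1) ∧
    LowerTri (permMat w⁻¹ * (u : Matrix (Fin n) (Fin n) F) * permMat w)}

/-- The Bruhat cell `C_w = U_w w B`. -/
def bruhatCell (F : Type*) [Field F] {n : ℕ} (w : Equiv.Perm (Fin n)) :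
    Set (GL (Fin n) F) :=
  {x | ∃ u ∈ Uw F w, ∃ b ∈ borelGL F n,
    (x : Matrix (Fin n) (Fin n) F) =
      (u : Matrix (Fin n) (Fin n) F) * permMat w * (b : Matrix (Fin n) (Fin n) F)}

theorem UpperTri.mul {F : Type*} [Field F] {n : ℕ} {M N : Matrix (Fin n) (Fin n) F}
    (hM : UpperTri M) (hN : UpperTri N) : UpperTri (M * N) :=
  BlockTriangular.mul hM hN

theorem UpperTri.inv {F : Type*} [Field F] {n : ℕ} {M : Matrix (Fin n) (Fin n) F}
    (hM : UpperTri M) : UpperTri M⁻¹ := by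
  by_cases h : IsUnit M.det
  · have := M.invertibleOfIsUnitDet h
    exact blockTriangular_inv_of_blockTriangular hM
  · rw [nonsing_inv_apply_not_isUnit M h]
    exact fun _ _ _ => rfl

def unitOfMulSelfEqZero {A : Type*} [Ring A] {z : A} (hz : z * z = 0) : Aˣ where
  val := 1 + z
  inv := 1 - z
  val_inv := by simp [mul_sub, add_mul, hz]
  inv_val := by simp [sub_mul, mul_add, hz]

theorem Finset.sum_eq_zero_of_forall_sum_equiv_eq_zero {α ι M : Type*} [Fintype ι] [Nonempty ι]
    [AddCommMonoid M] [Module.IsTorsionFree ℕ M] {s : Finset α} (T : ι → α ≃ α)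
    (hT : ∀ i x, T i x ∈ s ↔ x ∈ s) {f : α → M} (h : ∀ x ∈ s, ∑ i, f (T i x) = 0) :
    ∑ x ∈ s, f x = 0 := by
  have hinv (i : ι) : ∑ x ∈ s, f (T i x) = ∑ x ∈ s, f x :=
    Finset.sum_equiv (T i) (fun x => (hT i x).symm) fun _ _ => rfl
  have hcard : Fintype.card ι • ∑ x ∈ s, f x = 0 := by
    rw [← Finset.card_univ, ← Finset.sum_const, ← Finset.sum_congr rfl fun i _ => hinv i,
      Finset.sum_comm]
    exact Finset.sum_eq_zero h
  exact (smul_eq_zero_iff_right Fintype.card_ne_zero).mp hcard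

theorem sum_addChar_comp_linearMap_eq_zero {F V R : Type*} [Field F] [AddCommGroup V]
    [Module F V] [Fintype V] [CommRing R] [IsDomain R] {φ : AddChar F R} (hφ : φ ≠ 1)
    {L : V →ₗ[F] F} (hL : L ≠ 0) : ∑ v, φ (L v) = 0 := by
  refine AddChar.sum_eq_zero_of_ne_one (ψ := φ.compAddMonoidHom L.toAddMonoidHom) ?_
  obtain ⟨t, ht⟩ := AddChar.ne_one_iff.mp hφ
  obtain ⟨v, rfl⟩ := LinearMap.surjective hL t
  exact AddChar.ne_one_iff.mpr ⟨v, ht⟩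

theorem sum_addChar_trace_mul_eq_zero {ι F R : Type*} [Fintype ι] [DecidableEq ι] [Field F]
    [Fintype F] [CommRing R] [IsDomain R] {φ : AddChar F R} (hφ : φ ≠ 1) {M : Matrix ι ι F}
    (hM : M ≠ 0) : ∑ v : Matrix ι ι F, φ (trace (M * v)) = 0 := by
  refine sum_addChar_comp_linearMap_eq_zero hφ (L := traceLinearMap ι F F ∘ₗ LinearMap.mulLeft F M)
    fun hL => hM ?_
  rw [ext_iff_trace_mul_right]
  intro v
  simpa using LinearMap.congr_fun hL v

namespace BruhatKloosterman

section Proj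

variable {ι F : Type*} [Fintype ι] [Field F]

noncomputable def proj (s : Set ι) : Matrix ι ι F :=
  diagonal fun i => if i ∈ s then 1 else 0

@[simp]
theorem proj_mul_apply (s : Set ι) (M : Matrix ι ι F) (i j : ι) :
    (proj s * M : Matrix ι ι F) i j = if i ∈ s then M i j else 0 := by
  simp [proj, diagonal_mul]

@[simp]
theorem mul_proj_apply (s : Set ι) (M : Matrix ι ι F) (i j : ι) :
    (M * proj s : Matrix ι ι F) i j = if j ∈ s then M i j else 0 := by
  simp [proj, mul_diagonal]

theorem proj_mul_proj (s t : Set ι) : (proj s * proj t : Matrix ι ι F) = proj (s ∩ t) := by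
  ext i j
  simp only [proj, diagonal_mul_diagonal, diagonal_apply, Set.mem_inter_iff]
  split_ifs <;> simp_all

theorem proj_mul_proj_of_disjoint {s t : Set ι} (h : Disjoint s t) :
    (proj s * proj t : Matrix ι ι F) = 0 := by
  rw [proj_mul_proj, h.inter_eq]
  ext i j
  simp [proj, diagonal_apply]

theorem rank_proj (s : Set ι) : (proj s : Matrix ι ι F).rank = s.ncard := by
  rw [proj, rank_diagonal, ← Nat.card_coe_set_eq, Nat.card_eq_fintype_card]
  exact Fintype.card_congr (Equiv.subtypeEquivRight fun i => by by_cases h : i ∈ s <;> simp [h])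

end Proj

section Corner

variable {F : Type*} [Field F] {n : ℕ} {R C : Set (Fin n)} {U V : Matrix (Fin n) (Fin n) F}

theorem proj_mul_eq_proj_mul_mul_proj (hR : IsUpperSet R) (hU : UpperTri U) :
    proj R * U = proj R * U * proj R := by
  ext i j
  by_cases hj : j ∈ R
  · simp [hj]
  · by_cases hi : i ∈ R
    · simp [hi, hj, hU i j (lt_of_not_ge fun hij => hj (hR hij hi))]
    · simp [hi, hj]

theorem mul_proj_eq_proj_mul_mul_proj (hC : IsLowerSet C) (hV : UpperTri V) :
    V * proj C = proj C * V * proj C := by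
  ext i j
  by_cases hi : i ∈ C
  · simp [hi]
  · by_cases hj : j ∈ C
    · simp [hj, hV i j (lt_of_not_ge fun hij => hi (hC hij hj))]
    · simp [hj]

theorem rank_proj_mul_le (hR : IsUpperSet R) (hU : UpperTri U) (X : Matrix (Fin n) (Fin n) F) :
    rank (proj R * (U * X)) ≤ rank (proj R * X) := by
  rw [← Matrix.mul_assoc, proj_mul_eq_proj_mul_mul_proj hR hU, Matrix.mul_assoc _ (proj R)]
  exact rank_mul_le_right (proj R * U) (proj R * X)

theorem rank_mul_le_of_isLowerSet (hC : IsLowerSet C) (hV : UpperTri V)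
    (X : Matrix (Fin n) (Fin n) F) : rank (X * (V * proj C)) ≤ rank (X * proj C) := by
  rw [mul_proj_eq_proj_mul_mul_proj hC hV, Matrix.mul_assoc (proj C), ← Matrix.mul_assoc X]
  exact rank_mul_le_left (X * proj C) (V * proj C)

theorem rank_proj_mul_upperTri_mul (hR : IsUpperSet R) (hU : UpperTri U) (hU' : IsUnit U)
    (X : Matrix (Fin n) (Fin n) F) : rank (proj R * (U * X)) = rank (proj R * X) := by
  refine (rank_proj_mul_le hR hU X).antisymm ?_
  have hdet := (isUnit_iff_isUnit_det U).mp hU'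
  simpa only [U.nonsing_inv_mul_cancel_left X hdet] using rank_proj_mul_le hR hU.inv (U * X)

theorem rank_mul_upperTri_mul_proj (hC : IsLowerSet C) (hV : UpperTri V) (hV' : IsUnit V)
    (X : Matrix (Fin n) (Fin n) F) : rank (X * (V * proj C)) = rank (X * proj C) := by
  refine (rank_mul_le_of_isLowerSet hC hV X).antisymm ?_
  have hdet := (isUnit_iff_isUnit_det V).mp hV'
  simpa only [Matrix.mul_assoc, V.mul_nonsing_inv_cancel_left (proj C) hdet]
    using rank_mul_le_of_isLowerSet hC hV.inv (X * V)

theorem permMat_eq_permMatrix (σ : Equiv.Perm (Fin n)) :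
    (permMat σ : Matrix (Fin n) (Fin n) F) = σ⁻¹.permMatrix F := by
  ext i j
  simp [permMat, PEquiv.toMatrix_apply, Equiv.eq_symm_apply, eq_comm]

theorem permMat_mul_permMat_inv (σ : Equiv.Perm (Fin n)) :
    (permMat σ * permMat σ⁻¹ : Matrix (Fin n) (Fin n) F) = 1 := by
  simp [permMat_eq_permMatrix, ← Matrix.permMatrix_mul]

theorem inv_permMat (σ : Equiv.Perm (Fin n)) :
    (permMat σ : Matrix (Fin n) (Fin n) F)⁻¹ = permMat σ⁻¹ :=
  inv_eq_right_inv (permMat_mul_permMat_inv σ)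

theorem proj_mul_permMat (R : Set (Fin n)) (σ : Equiv.Perm (Fin n)) :
    (proj R * permMat σ : Matrix (Fin n) (Fin n) F) = permMat σ * proj (σ ⁻¹' R) := by
  ext i j
  by_cases h : σ j = i
  · subst h
    simp [permMat]
  · simp [permMat, h]

noncomputable def cornerCount (σ : Equiv.Perm (Fin n)) (R C : Set (Fin n)) : ℕ :=
  (σ ⁻¹' R ∩ C).ncard

theorem rank_proj_mul_permMat_mul_proj (R C : Set (Fin n)) (σ : Equiv.Perm (Fin n)) :
    rank (proj R * permMat σ * proj C : Matrix (Fin n) (Fin n) F) = cornerCount σ R C := by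
  rw [proj_mul_permMat, Matrix.mul_assoc, proj_mul_proj,
    rank_mul_eq_right_of_isUnit_det _ _ (isUnit_det_of_right_inverse (permMat_mul_permMat_inv σ)),
    rank_proj]
  rfl

theorem rank_corner_upperTri_mul_permMat_mul_upperTri (hR : IsUpperSet R) (hC : IsLowerSet C)
    (hU : UpperTri U) (hU' : IsUnit U) (hV : UpperTri V) (hV' : IsUnit V) (σ : Equiv.Perm (Fin n)) :
    rank (proj R * (U * permMat σ * V) * proj C) = cornerCount σ R C := by
  simp only [Matrix.mul_assoc]
  rw [rank_proj_mul_upperTri_mul hR hU hU', ← Matrix.mul_assoc,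
    rank_mul_upperTri_mul_proj hC hV hV', rank_proj_mul_permMat_mul_proj]

end Corner

section BruhatCell

variable {F : Type*} [Field F] {n : ℕ} {w : Equiv.Perm (Fin n)} {x b : GL (Fin n) F}

theorem inv_mem_borelGL (hb : b ∈ borelGL F n) : b⁻¹ ∈ borelGL F n := by
  change UpperTri (b⁻¹ : GL (Fin n) F).val
  rw [coe_units_inv]
  exact UpperTri.inv hb

theorem mul_mem_bruhatCell (hx : x ∈ bruhatCell F w) (hb : b ∈ borelGL F n) :
    x * b ∈ bruhatCell F w := by
  obtain ⟨u, hu, b', hb', hx⟩ := hx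
  exact ⟨u, hu, b' * b, UpperTri.mul hb' hb, by simp [hx, Matrix.mul_assoc]⟩

theorem mul_mem_bruhatCell_iff (hb : b ∈ borelGL F n) :
    x * b ∈ bruhatCell F w ↔ x ∈ bruhatCell F w :=
  ⟨fun h => by simpa using mul_mem_bruhatCell h (inv_mem_borelGL hb),
    fun h => mul_mem_bruhatCell h hb⟩

theorem corner_ne_zero_of_mem_bruhatCell {R C : Set (Fin n)} (hR : IsUpperSet R)
    (hC : IsLowerSet C) {a : Matrix (Fin n) (Fin n) F} (ha : UpperTri a) (ha' : IsUnit a)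
    (hx : x ∈ bruhatCell F w) (hw : cornerCount w R C ≠ cornerCount w⁻¹ R C) :
    proj R * (a * (x : Matrix (Fin n) (Fin n) F) -
      ((x⁻¹ : GL (Fin n) F) : Matrix (Fin n) (Fin n) F)) * proj C ≠ 0 := by
  obtain ⟨u, ⟨hu, -, -⟩, b, hb, hxub⟩ := hx
  have hax : a * (x : Matrix (Fin n) (Fin n) F) =
      a * (u : Matrix (Fin n) (Fin n) F) * permMat w * (b : Matrix (Fin n) (Fin n) F) := by
    rw [hxub]
    simp only [Matrix.mul_assoc]
  have hxinv : ((x⁻¹ : GL (Fin n) F) : Matrix (Fin n) (Fin n) F) =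
      ((b⁻¹ : GL (Fin n) F) : Matrix (Fin n) (Fin n) F) * permMat w⁻¹ *
        ((u⁻¹ : GL (Fin n) F) : Matrix (Fin n) (Fin n) F) := by
    rw [coe_units_inv, coe_units_inv, coe_units_inv, hxub, Matrix.mul_inv_rev,
      Matrix.mul_inv_rev, inv_permMat, Matrix.mul_assoc]
  intro h
  rw [Matrix.mul_sub, Matrix.sub_mul, sub_eq_zero, hax, hxinv] at h
  apply hw
  rw [← rank_corner_upperTri_mul_permMat_mul_upperTri hR hC (ha.mul hu) (ha'.mul u.isUnit) hb
      b.isUnit, h, rank_corner_upperTri_mul_permMat_mul_upperTri hR hC (inv_mem_borelGL hb)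
      (b⁻¹).isUnit (inv_mem_borelGL hu) (u⁻¹).isUnit]

end BruhatCell

section Permutation

variable {n : ℕ} {σ : Equiv.Perm (Fin n)}

theorem apply_eq_inv_apply_of_apply_lt (H : ∀ l m : Fin n, m < l → (σ⁻¹ l ≤ m ↔ σ l ≤ m))
    {l : Fin n} (hl : σ l < l) : σ l = σ⁻¹ l := by
  have h : σ⁻¹ l ≤ σ l := (H l _ hl).mpr le_rfl
  exact le_antisymm ((H l _ (h.trans_lt hl)).mp le_rfl) h

theorem sq_eq_one_of_forall_inv_apply_le_iff
    (H : ∀ l m : Fin n, m < l → (σ⁻¹ l ≤ m ↔ σ l ≤ m)) : σ ^ 2 = 1 := by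
  have H' : ∀ l m : Fin n, m < l → (σ⁻¹⁻¹ l ≤ m ↔ σ⁻¹ l ≤ m) := fun l m h => by
    rw [inv_inv]
    exact (H l m h).symm
  refine Equiv.ext fun p => ?_
  rcases lt_trichotomy (σ p) p with h | h | h
  · rw [sq, Equiv.Perm.mul_apply, apply_eq_inv_apply_of_apply_lt H h]
    simp
  · simp [sq, h]
  · have hq : σ⁻¹ (σ p) < σ p := by simpa using h
    have h2 := apply_eq_inv_apply_of_apply_lt H' hq
    simp only [Equiv.Perm.coe_inv, Equiv.symm_apply_apply, inv_inv] at h2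
    simpa [sq] using h2.symm

theorem cornerCount_Ici (σ : Equiv.Perm (Fin n)) (l : Fin n) (C : Set (Fin n)) :
    cornerCount σ (Set.Ici l) C = cornerCount σ (Set.Ioi l) C + if σ⁻¹ l ∈ C then 1 else 0 := by
  have hpre : σ ⁻¹' Set.Ici l = insert (σ⁻¹ l) (σ ⁻¹' Set.Ioi l) := by
    ext j
    simp [← Set.Ioi_insert, Equiv.eq_symm_apply]
  unfold cornerCount
  split_ifs with h
  · rw [hpre, Set.insert_inter_of_mem h, Set.ncard_insert_of_notMem (by simp)]
  · rw [hpre, Set.insert_inter_of_notMem h, add_zero]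

/-- Comparing the corners `Ici l × Iic m` and `Ioi l × Iic m` isolates row `l`, whose one sits in
column `σ⁻¹ l` for `σ` and in column `σ l` for `σ⁻¹`. -/
theorem exists_cornerCount_ne_of_sq_ne_one (hσ : σ ^ 2 ≠ 1) :
    ∃ R C : Set (Fin n), IsUpperSet R ∧ IsLowerSet C ∧ Disjoint R C ∧
      cornerCount σ R C ≠ cornerCount σ⁻¹ R C := by
  contrapose! hσ
  refine sq_eq_one_of_forall_inv_apply_le_iff fun l m hml => ?_
  have key := fun R (hR : IsUpperSet R) (hRm : ∀ r ∈ R, m < r) =>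
    hσ R (Set.Iic m) hR (isLowerSet_Iic m)
      (Set.disjoint_left.mpr fun r hr hr' => (hRm r hr).not_ge hr')
  have hIci := key _ (isUpperSet_Ici l) fun r hr => hml.trans_le hr
  rw [cornerCount_Ici, cornerCount_Ici, inv_inv,
    key _ (isUpperSet_Ioi l) fun r hr => hml.trans hr, add_right_inj] at hIci
  simp only [Set.mem_Iic] at hIci
  by_cases h : σ l ≤ m <;> simpa [h] using hIci

end Permutation

section Unipotent

variable {F : Type*} [Field F] {n : ℕ} {R C : Set (Fin n)}

theorem corner_mul_self (hRC : Disjoint R C) (v : Matrix (Fin n) (Fin n) F) :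
    proj C * v * proj R * (proj C * v * proj R) = 0 := by
  simp only [← Matrix.mul_assoc, Matrix.mul_assoc _ (proj R) (proj C),
    proj_mul_proj_of_disjoint hRC, Matrix.mul_zero, Matrix.zero_mul]

noncomputable def unipotent (hRC : Disjoint R C) (v : Matrix (Fin n) (Fin n) F) : GL (Fin n) F :=
  unitOfMulSelfEqZero (corner_mul_self hRC v)

theorem unipotent_mem_borelGL (hC : IsLowerSet C) (hRC : Disjoint R C)
    (v : Matrix (Fin n) (Fin n) F) : unipotent hRC v ∈ borelGL F n := by
  intro i j hji
  by_cases hi : i ∈ C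
  · have hj : j ∉ R := Set.disjoint_right.mp hRC (hC hji.le hi)
    simp [unipotent, unitOfMulSelfEqZero, one_apply_ne hji.ne', hj]
  · simp [unipotent, unitOfMulSelfEqZero, one_apply_ne hji.ne', hi]

theorem trace_mul_add_inv_mul_unipotent (hRC : Disjoint R C) (a : Matrix (Fin n) (Fin n) F)
    (x : GL (Fin n) F) (v : Matrix (Fin n) (Fin n) F) :
    trace (a * ((x * unipotent hRC v : GL (Fin n) F) : Matrix (Fin n) (Fin n) F) +
        (((x * unipotent hRC v)⁻¹ : GL (Fin n) F) : Matrix (Fin n) (Fin n) F)) =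
      trace (a * (x : Matrix (Fin n) (Fin n) F) +
        ((x⁻¹ : GL (Fin n) F) : Matrix (Fin n) (Fin n) F)) +
      trace (proj R * (a * (x : Matrix (Fin n) (Fin n) F) -
        ((x⁻¹ : GL (Fin n) F) : Matrix (Fin n) (Fin n) F)) * proj C * v) := by
  set X : Matrix (Fin n) (Fin n) F := ↑x
  set Y : Matrix (Fin n) (Fin n) F := ↑x⁻¹
  set z := proj C * v * proj R
  have hz : trace ((a * X - Y) * z) = trace (proj R * (a * X - Y) * proj C * v) := by
    rw [Matrix.mul_assoc (proj R * _), Matrix.mul_assoc (proj R), trace_mul_comm (proj R)]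
    simp only [z, Matrix.mul_assoc]
  have hval : ((x * unipotent hRC v : GL (Fin n) F) : Matrix (Fin n) (Fin n) F) = X * (1 + z) := rfl
  have hinv : (((x * unipotent hRC v)⁻¹ : GL (Fin n) F) : Matrix (Fin n) (Fin n) F) =
      (1 - z) * Y := by
    rw [_root_.mul_inv_rev]
    rfl
  have hexpand : a * (X * (1 + z)) + (1 - z) * Y = (a * X + Y) + (a * X * z - z * Y) := by
    noncomm_ring
  rw [hval, hinv, ← hz, hexpand, trace_add, Matrix.sub_mul, trace_sub, trace_sub,
    trace_mul_comm z Y]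

end Unipotent

end BruhatKloosterman

open BruhatKloosterman in
/-- If `a` is upper triangular and invertible, and `w² ≠ 1`, then the Kloosterman sum
over the Bruhat cell `C_w` vanishes. -/
theorem kloosterman_bruhat_cell_vanishes {F : Type*} [Field F] [Fintype F] [DecidableEq F]
    {n : ℕ} (φ : AddChar F ℂ) (hφ : φ ≠ 1)
    (a : Matrix (Fin n) (Fin n) F) (ha : UpperTri a) (hinv : IsUnit a)
    (w : Equiv.Perm (Fin n)) (hw : w ^ 2 ≠ 1) :
    (∑ x ∈ Finset.univ.filter (fun x : GL (Fin n) F => x ∈ bruhatCell F w),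
      φ (Matrix.trace (a * (x : Matrix (Fin n) (Fin n) F) +
          ((x⁻¹ : GL (Fin n) F) : Matrix (Fin n) (Fin n) F)))) = 0 := by
  obtain ⟨R, C, hR, hC, hRC, hcount⟩ := exists_cornerCount_ne_of_sq_ne_one hw
  refine Finset.sum_eq_zero_of_forall_sum_equiv_eq_zero
    (fun v => Equiv.mulRight (unipotent hRC v))
    (fun v x => by simp [mul_mem_bruhatCell_iff (unipotent_mem_borelGL hC hRC v)])
    fun x hx => ?_
  simp only [Equiv.coe_mulRight, trace_mul_add_inv_mul_unipotent, AddChar.map_add_eq_mul,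
    ← Finset.mul_sum]
  rw [sum_addChar_trace_mul_eq_zero hφ
    (corner_ne_zero_of_mem_bruhatCell hR hC ha hinv (Finset.mem_filter.mp hx).2 hcount), mul_zero]
end
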